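/- arXiv:2105.11355 — 3 statements merged into one kernel-verified Lean document; each statement's English description precedes it below -/
import Mathlib

section
/- Let m ≥ 2 and let f : [0,1]^m → ℝ be a function such that the upper-scaled oscillation L_f(x) is finite for every x ∈ [0,1]^m. Then for Lebesgue-almost every y ∈ ℝ, the level set f⁻¹(y) is (m−1)-rectifiable and has σ-finite (m−1)-dimensional Hausdorff measure. -/
open Set MeasureTheory Metric Filter
open scoped ENNReal NNReal Topology

/-- Lower-scaled oscillation of `f` with domain `A`:
`l_f(x) = liminf_{r→0⁺} (sup_{y ∈ A, dist y x ≤ r} dist (f y) (f x)) / r`. -/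
noncomputable def lowerScaledOsc {E F : Type*} [PseudoMetricSpace E] [PseudoMetricSpace F]
    (A : Set E) (f : E → F) (x : E) : ℝ≥0∞ :=
  Filter.liminf
    (fun r : ℝ =>
      (⨆ (y : E) (_ : y ∈ A) (_ : dist y x ≤ r), ENNReal.ofReal (dist (f y) (f x))) /
        ENNReal.ofReal r)
    (nhdsWithin 0 (Set.Ioi 0))

/-- Upper-scaled oscillation of `f` with domain `A`:
`L_f(x) = limsup_{r→0⁺} (sup_{y ∈ A, dist y x ≤ r} dist (f y) (f x)) / r`. -/
noncomputable def upperScaledOsc {E F : Type*} [PseudoMetricSpace E] [PseudoMetricSpace F]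
    (A : Set E) (f : E → F) (x : E) : ℝ≥0∞ :=
  Filter.limsup
    (fun r : ℝ =>
      (⨆ (y : E) (_ : y ∈ A) (_ : dist y x ≤ r), ENNReal.ofReal (dist (f y) (f x))) /
        ENNReal.ofReal r)
    (nhdsWithin 0 (Set.Ioi 0))

/-- `A ⊆ ℝ^m` is `s`-rectifiable: there are countably many Lipschitz maps
`g i : ℝ^s → ℝ^m` whose ranges cover `A` up to an `H^s`-null set. -/
def IsHRectifiable (s : ℕ) {m : ℕ} (A : Set (Fin m → ℝ)) : Prop :=
  ∃ g : ℕ → (Fin s → ℝ) → (Fin m → ℝ),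
    (∀ i, ∃ K : ℝ≥0, LipschitzWith K (g i)) ∧
    μH[(s : ℝ)] (A \ ⋃ i, Set.range (g i)) = 0

/-!
Finiteness of `L_f` makes `f` Lipschitz at small scales around each point, so the cube is a
countable union of pieces `P i` on which `f` is Lipschitz; extend `f|P i` to a Lipschitz `F i`
on `ℝ^m`. Eilenberg's inequality `∫* H^{m-1}(S ∩ F⁻¹ y) dy ≤ Lip(F) · H^m(S)` then gives, for
a.e. `y`, that `H^{m-1}(P i ∩ F i⁻¹ y) < ∞`, and that `F i⁻¹ y` meets the points where `F i` is
not differentiable (an `H^m`-null set, by Rademacher) or has zero derivative (where `F i` is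
`ε`-Lipschitz at small scales for every `ε > 0`) in an `H^{m-1}`-null set. At the remaining
points some partial derivative of `F i` is nonzero, so nearby the level set is a Lipschitz
graph over a coordinate hyperplane.
-/

namespace MeasureTheory

/-- The upper Lebesgue integral; the slice functions `y ↦ μH[d] (S ∩ F ⁻¹' {y})` below need not
be measurable. -/
noncomputable def upperLIntegral {α : Type*} [MeasurableSpace α] (μ : Measure α)
    (φ : α → ℝ≥0∞) : ℝ≥0∞ :=
  ⨅ (v : α → ℝ≥0∞) (_ : Measurable v) (_ : φ ≤ v), ∫⁻ a, v a ∂μ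

variable {α : Type*} [MeasurableSpace α] {μ : Measure α} {φ ψ : α → ℝ≥0∞}

theorem upperLIntegral_le_lintegral {v : α → ℝ≥0∞} (hv : Measurable v) (h : φ ≤ v) :
    upperLIntegral μ φ ≤ ∫⁻ a, v a ∂μ :=
  iInf₂_le_of_le v hv (iInf_le _ h)

theorem upperLIntegral_mono (h : φ ≤ ψ) : upperLIntegral μ φ ≤ upperLIntegral μ ψ :=
  le_iInf₂ fun _ hv => le_iInf fun hψ => upperLIntegral_le_lintegral hv (h.trans hψ)

theorem exists_measurable_ge_lintegral_eq_upperLIntegral (φ : α → ℝ≥0∞) :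
    ∃ v : α → ℝ≥0∞, Measurable v ∧ φ ≤ v ∧ ∫⁻ a, v a ∂μ = upperLIntegral μ φ := by
  rcases eq_top_or_lt_top (upperLIntegral μ φ) with htop | hlt
  · refine ⟨fun _ => ⊤, measurable_const, fun _ => le_top, ?_⟩
    rw [htop]
    exact top_le_iff.1 (htop.symm.le.trans
      (upperLIntegral_le_lintegral measurable_const fun _ => le_top))
  have hex : ∀ n : ℕ, ∃ v, Measurable v ∧ φ ≤ v ∧
      ∫⁻ a, v a ∂μ < upperLIntegral μ φ + (n : ℝ≥0∞)⁻¹ := by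
    intro n
    have := ENNReal.lt_add_right hlt.ne (ENNReal.inv_ne_zero.2 (ENNReal.natCast_ne_top n))
    simpa only [upperLIntegral, iInf_lt_iff, exists_prop] using this
  choose v hvm hφv hv using hex
  refine ⟨fun a => ⨅ n, v n a, .iInf hvm, fun a => le_iInf fun n => hφv n a, le_antisymm ?_
    (upperLIntegral_le_lintegral (.iInf hvm) fun a => le_iInf fun n => hφv n a)⟩
  have hlim := ENNReal.tendsto_inv_nat_nhds_zero.const_add (upperLIntegral μ φ)
  rw [add_zero] at hlim
  refine ge_of_tendsto hlim (Eventually.of_forall fun n => ?_)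
  exact (lintegral_mono fun a => iInf_le _ n).trans (hv n).le

theorem ae_lt_top_of_upperLIntegral_ne_top (h : upperLIntegral μ φ ≠ ⊤) : ∀ᵐ a ∂μ, φ a < ⊤ := by
  obtain ⟨v, hvm, hφv, hv⟩ := exists_measurable_ge_lintegral_eq_upperLIntegral (μ := μ) φ
  filter_upwards [ae_lt_top hvm (hv ▸ h)] with a ha using (hφv a).trans_lt ha

theorem ae_eq_zero_of_upperLIntegral_eq_zero (h : upperLIntegral μ φ = 0) : ∀ᵐ a ∂μ, φ a = 0 := by
  obtain ⟨v, hvm, hφv, hv⟩ := exists_measurable_ge_lintegral_eq_upperLIntegral (μ := μ) φ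
  filter_upwards [(lintegral_eq_zero_iff hvm).1 (hv.trans h)] with a ha
    using le_antisymm ((hφv a).trans_eq ha) bot_le

theorem upperLIntegral_iSup_le_of_monotone {φ : ℕ → α → ℝ≥0∞} (hφ : Monotone φ) :
    upperLIntegral μ (⨆ n, φ n) ≤ ⨆ n, upperLIntegral μ (φ n) := by
  choose v hvm hφv hv using fun n => exists_measurable_ge_lintegral_eq_upperLIntegral (μ := μ) (φ n)
  have hle : ⨆ n, φ n ≤ fun a => liminf (fun n => v n a) atTop := fun a => by
    rw [iSup_apply]
    exact iSup_le fun n => le_liminf_of_le (by isBoundedDefault) <|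
      eventually_atTop.2 ⟨n, fun k hk => (hφ hk a).trans (hφv k a)⟩
  calc upperLIntegral μ (⨆ n, φ n)
      ≤ ∫⁻ a, liminf (fun n => v n a) atTop ∂μ :=
        upperLIntegral_le_lintegral (.liminf hvm) hle
    _ ≤ liminf (fun n => ∫⁻ a, v n a ∂μ) atTop := lintegral_liminf_le hvm
    _ ≤ ⨆ n, upperLIntegral μ (φ n) := by
        simp only [hv]
        exact liminf_le_of_frequently_le' (Frequently.of_forall fun n => le_iSup_of_le n le_rfl)
end MeasureTheory

section Eilenberg
variable {X : Type*} [EMetricSpace X] {S T : Set X} {F : X → ℝ} {K : ℝ≥0} {r : ℝ≥0∞} {d : ℝ}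

theorem ediam_image_inter_le
    (hF : ∀ x ∈ S, ∀ z ∈ S, edist x z ≤ r → edist (F x) (F z) ≤ K * edist x z)
    (hT : ediam T ≤ r) : ediam (F '' (S ∩ T)) ≤ K * ediam T :=
  ediam_image_le_iff.2 fun x hx z hz =>
    have hxz := edist_le_ediam_of_mem hx.2 hz.2
    (hF x hx.1 z hz.1 (hxz.trans hT)).trans (by gcongr)

theorem lintegral_indicator_closure_image_le (hd : 0 ≤ d)
    (hF : ∀ x ∈ S, ∀ z ∈ S, edist x z ≤ r → edist (F x) (F z) ≤ K * edist x z)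
    (hT : ediam T ≤ r) :
    ∫⁻ y, (closure (F '' (S ∩ T))).indicator (fun _ => ediam T ^ d) y ≤
      K * ⨆ _ : T.Nonempty, ediam T ^ (d + 1) := by
  rw [lintegral_indicator_const isClosed_closure.measurableSet]
  rcases T.eq_empty_or_nonempty with rfl | hne
  · simp
  calc ediam T ^ d * volume (closure (F '' (S ∩ T)))
      ≤ ediam T ^ d * (K * ediam T) := by
        gcongr
        exact (Real.volume_le_diam _).trans
          ((ediam_closure _).trans_le (ediam_image_inter_le hF hT))
    _ = K * ⨆ _ : T.Nonempty, ediam T ^ (d + 1) := by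
        rw [iSup_pos hne, ENNReal.rpow_add_of_nonneg _ _ hd zero_le_one, ENNReal.rpow_one]
        ring

theorem ediam_inter_preimage_rpow_le_indicator (hd : 0 < d) (y : ℝ) :
    ediam (S ∩ T ∩ F ⁻¹' {y}) ^ d ≤
      (closure (F '' (S ∩ T))).indicator (fun _ => ediam T ^ d) y := by
  rcases (S ∩ T ∩ F ⁻¹' {y}).eq_empty_or_nonempty with h | ⟨x, hxST, rfl⟩
  · simp [h, ENNReal.zero_rpow_of_pos hd]
  rw [indicator_of_mem (subset_closure (mem_image_of_mem F hxST))]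
  exact ENNReal.rpow_le_rpow (ediam_mono (inter_subset_left.trans inter_subset_right)) hd.le

variable [MeasurableSpace X] [BorelSpace X]

theorem exists_cover_tsum_lt_of_hausdorffMeasure_lt {b δ : ℝ≥0∞}
    (hS : μH[d] S < b) (hδ : 0 < δ) :
    ∃ t : ℕ → Set X, S ⊆ ⋃ n, t n ∧ (∀ n, ediam (t n) ≤ δ) ∧
      ∑' n, ⨆ _ : (t n).Nonempty, ediam (t n) ^ d < b := by
  have hlt : (⨅ (t : ℕ → Set X) (_ : S ⊆ ⋃ n, t n) (_ : ∀ n, ediam (t n) ≤ δ),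
      ∑' n, ⨆ _ : (t n).Nonempty, ediam (t n) ^ d) < b := by
    refine lt_of_le_of_lt ?_ hS
    rw [Measure.hausdorffMeasure_apply]
    exact le_iSup₂_of_le δ hδ le_rfl
  simpa only [iInf_lt_iff, exists_prop] using hlt

theorem hausdorffMeasure_inter_preimage_le_liminf (hd : 0 < d) {δ : ℕ → ℝ≥0∞}
    (hδ : Tendsto δ atTop (𝓝 0)) {t : ℕ → ℕ → Set X} (htS : ∀ n, S ⊆ ⋃ i, t n i)
    (htδ : ∀ n i, ediam (t n i) ≤ δ n) (y : ℝ) :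
    μH[d] (S ∩ F ⁻¹' {y}) ≤ liminf (fun n =>
      ∑' i, (closure (F '' (S ∩ t n i))).indicator (fun _ => ediam (t n i) ^ d) y) atTop := by
  refine (Measure.hausdorffMeasure_le_liminf_tsum d _ δ hδ (fun n i => S ∩ t n i ∩ F ⁻¹' {y})
    (Eventually.of_forall fun n i => (ediam_mono ?_).trans (htδ n i))
    (Eventually.of_forall fun n => ?_)).trans ?_
  · exact inter_subset_left.trans inter_subset_right
  · rintro x ⟨hxS, hxy⟩
    obtain ⟨i, hi⟩ := mem_iUnion.1 (htS n hxS)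
    exact mem_iUnion.2 ⟨i, ⟨hxS, hi⟩, hxy⟩
  · exact liminf_le_liminf (Eventually.of_forall fun n => ENNReal.tsum_le_tsum fun i =>
      ediam_inter_preimage_rpow_le_indicator hd y)

/-- A piece `t` of a cover of `S` contributes `ediam t ^ d` to each slice `y` in the closure of
`F '' (S ∩ t)`, a set of length at most `K * ediam t`. -/
theorem upperLIntegral_hausdorffMeasure_inter_preimage_le_of_lt (hd : 0 < d) (hr : 0 < r)
    (hF : ∀ x ∈ S, ∀ z ∈ S, edist x z ≤ r → edist (F x) (F z) ≤ K * edist x z)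
    {b : ℝ≥0∞} (hb : μH[d + 1] S < b) :
    upperLIntegral volume (fun y => μH[d] (S ∩ F ⁻¹' {y})) ≤ K * b := by
  set δ : ℕ → ℝ≥0∞ := fun n => min r (n : ℝ≥0∞)⁻¹
  have hδ : ∀ n, 0 < δ n := fun n => lt_min hr (ENNReal.inv_pos.2 (ENNReal.natCast_ne_top n))
  have hδ0 : Tendsto δ atTop (𝓝 0) :=
    tendsto_of_tendsto_of_tendsto_of_le_of_le tendsto_const_nhds
      ENNReal.tendsto_inv_nat_nhds_zero (fun _ => zero_le) fun _ => min_le_right _ _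
  choose t htS htδ htb using fun n => exists_cover_tsum_lt_of_hausdorffMeasure_lt hb (hδ n)
  set g : ℕ → ℝ → ℝ≥0∞ := fun n y =>
    ∑' i, (closure (F '' (S ∩ t n i))).indicator (fun _ => ediam (t n i) ^ d) y
  have hg : ∀ n, Measurable (g n) := fun n => .tsum fun i =>
    measurable_const.indicator isClosed_closure.measurableSet
  have hgb : ∀ n, ∫⁻ y, g n y ≤ K * b := fun n => by
    rw [lintegral_tsum fun i =>
      (measurable_const.indicator isClosed_closure.measurableSet).aemeasurable]
    calc _ ≤ ∑' i, K * ⨆ _ : (t n i).Nonempty, ediam (t n i) ^ (d + 1) :=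
          ENNReal.tsum_le_tsum fun i => lintegral_indicator_closure_image_le hd.le hF
            ((htδ n i).trans (min_le_left _ _))
      _ ≤ K * b := by rw [ENNReal.tsum_mul_left]; gcongr; exact (htb n).le
  calc upperLIntegral volume (fun y => μH[d] (S ∩ F ⁻¹' {y}))
      ≤ ∫⁻ y, liminf (fun n => g n y) atTop :=
        upperLIntegral_le_lintegral (.liminf hg)
          (hausdorffMeasure_inter_preimage_le_liminf hd hδ0 htS htδ)
    _ ≤ liminf (fun n => ∫⁻ y, g n y) atTop := lintegral_liminf_le hg
    _ ≤ K * b := liminf_le_of_frequently_le' (Frequently.of_forall hgb)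

theorem upperLIntegral_hausdorffMeasure_inter_preimage_le (hd : 0 < d) (hr : 0 < r)
    (hF : ∀ x ∈ S, ∀ z ∈ S, edist x z ≤ r → edist (F x) (F z) ≤ K * edist x z)
    (hS : μH[d + 1] S ≠ ⊤) :
    upperLIntegral volume (fun y => μH[d] (S ∩ F ⁻¹' {y})) ≤ K * μH[d + 1] S := by
  have hlim := ENNReal.Tendsto.const_mul (a := K)
    (ENNReal.tendsto_inv_nat_nhds_zero.const_add (μH[d + 1] S)) (.inr ENNReal.coe_ne_top)
  rw [add_zero] at hlim
  exact ge_of_tendsto hlim (Eventually.of_forall fun n =>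
    upperLIntegral_hausdorffMeasure_inter_preimage_le_of_lt hd hr hF
      (ENNReal.lt_add_right hS (ENNReal.inv_ne_zero.2 (ENNReal.natCast_ne_top n))))

theorem LipschitzWith.ae_hausdorffMeasure_inter_preimage_lt_top (hd : 0 < d)
    (hF : LipschitzWith K F) (hS : μH[d + 1] S ≠ ⊤) :
    ∀ᵐ y, μH[d] (S ∩ F ⁻¹' {y}) < ⊤ :=
  ae_lt_top_of_upperLIntegral_ne_top <| ne_top_of_le_ne_top
    (ENNReal.mul_ne_top ENNReal.coe_ne_top hS)
    (upperLIntegral_hausdorffMeasure_inter_preimage_le hd ENNReal.zero_lt_top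
      (fun x _ z _ _ => hF x z) hS)

theorem LipschitzWith.ae_hausdorffMeasure_inter_preimage_eq_zero (hd : 0 < d)
    (hF : LipschitzWith K F) (hS : μH[d + 1] S = 0) :
    ∀ᵐ y, μH[d] (S ∩ F ⁻¹' {y}) = 0 :=
  ae_eq_zero_of_upperLIntegral_eq_zero <| nonpos_iff_eq_zero.1 <|
    (upperLIntegral_hausdorffMeasure_inter_preimage_le hd ENNReal.zero_lt_top
      (fun x _ z _ _ => hF x z) (hS ▸ ENNReal.zero_ne_top)).trans_eq (by rw [hS, mul_zero])

end Eilenberg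

section
variable {E : Type*} [NormedAddCommGroup E] [NormedSpace ℝ E]
  {S : Set E} {F : E → ℝ} {d : ℝ}

theorem exists_nat_edist_le_of_hasFDerivAt_zero {x : E} (hF : HasFDerivAt F (0 : E →L[ℝ] ℝ) x)
    {ε : ℝ≥0} (hε : 0 < ε) :
    ∃ p : ℕ, ∀ z, edist z x ≤ (p : ℝ≥0∞)⁻¹ → edist (F z) (F x) ≤ ε * edist z x := by
  obtain ⟨ρ, hρ, hball⟩ := Metric.nhds_basis_eball.eventually_iff.1 (hF.isLittleO.bound hε)
  obtain ⟨p, hp⟩ := ENNReal.exists_inv_nat_lt hρ.ne'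
  refine ⟨p, fun z hz => ?_⟩
  have h := hball (show z ∈ Metric.eball x ρ from hz.trans_lt hp)
  simp only [zero_apply, sub_zero] at h
  rw [edist_eq_enorm_sub, edist_eq_enorm_sub, ← ofReal_norm, ← ofReal_norm,
    ← ENNReal.ofReal_coe_nnreal, ← ENNReal.ofReal_mul ε.coe_nonneg]
  exact ENNReal.ofReal_le_ofReal h

variable [MeasurableSpace E] [BorelSpace E]

theorem upperLIntegral_hausdorffMeasure_inter_preimage_le_of_hasFDerivAt_zero (hd : 0 < d)
    (hF : ∀ x ∈ S, HasFDerivAt F (0 : E →L[ℝ] ℝ) x) (hS : μH[d + 1] S ≠ ⊤) {ε : ℝ≥0}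
    (hε : 0 < ε) :
    upperLIntegral volume (fun y => μH[d] (S ∩ F ⁻¹' {y})) ≤ ε * μH[d + 1] S := by
  set P : ℕ → Set E := fun p =>
    {x ∈ S | ∀ z, edist z x ≤ (p : ℝ≥0∞)⁻¹ → edist (F z) (F x) ≤ ε * edist z x}
  have hP : Monotone P := fun p q hpq x hx =>
    ⟨hx.1, fun z hz => hx.2 z (hz.trans (ENNReal.inv_le_inv.2 (Nat.cast_le.2 hpq)))⟩
  have hSP : S ⊆ ⋃ p, P p := fun x hx =>
    mem_iUnion.2 ((exists_nat_edist_le_of_hasFDerivAt_zero (hF x hx) hε).imp fun _ h => ⟨hx, h⟩)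
  have hPy : ∀ y, Monotone fun p => P p ∩ F ⁻¹' {y} := fun y p q hpq =>
    inter_subset_inter_left _ (hP hpq)
  calc upperLIntegral volume (fun y => μH[d] (S ∩ F ⁻¹' {y}))
      ≤ upperLIntegral volume (⨆ p, fun y => μH[d] (P p ∩ F ⁻¹' {y})) := by
        refine upperLIntegral_mono fun y => ?_
        rw [iSup_apply, ← (hPy y).measure_iUnion, ← iUnion_inter]
        exact measure_mono (inter_subset_inter_left _ hSP)
    _ ≤ ⨆ p, upperLIntegral volume (fun y => μH[d] (P p ∩ F ⁻¹' {y})) :=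
        upperLIntegral_iSup_le_of_monotone fun p q hpq y => measure_mono (hPy y hpq)
    _ ≤ ε * μH[d + 1] S := iSup_le fun p =>
        (upperLIntegral_hausdorffMeasure_inter_preimage_le hd
          (ENNReal.inv_pos.2 (ENNReal.natCast_ne_top p)) (fun x hx z hz hxz => hz.2 x hxz)
          (ne_top_of_le_ne_top hS (measure_mono (sep_subset _ _)))).trans
        (by gcongr; exact sep_subset _ _)

theorem ae_hausdorffMeasure_inter_preimage_eq_zero_of_hasFDerivAt_zero (hd : 0 < d)
    (hF : ∀ x ∈ S, HasFDerivAt F (0 : E →L[ℝ] ℝ) x) (hS : μH[d + 1] S ≠ ⊤) :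
    ∀ᵐ y, μH[d] (S ∩ F ⁻¹' {y}) = 0 := by
  refine ae_eq_zero_of_upperLIntegral_eq_zero (nonpos_iff_eq_zero.1 ?_)
  have hlim := ENNReal.Tendsto.mul_const (b := μH[d + 1] S)
    (ENNReal.tendsto_coe.2 tendsto_inv_atTop_nhds_zero_nat) (.inr hS)
  rw [ENNReal.coe_zero, zero_mul] at hlim
  exact ge_of_tendsto hlim ((eventually_ge_atTop 1).mono fun n hn =>
    upperLIntegral_hausdorffMeasure_inter_preimage_le_of_hasFDerivAt_zero hd hF hS
      (by positivity))
end

section IsHRectifiable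
variable {s m : ℕ} {A B : Set (Fin m → ℝ)}

theorem IsHRectifiable.mono (hB : IsHRectifiable s B) (hAB : A ⊆ B) : IsHRectifiable s A :=
  let ⟨g, hg, hB⟩ := hB
  ⟨g, hg, measure_mono_null (sdiff_subset_sdiff_left hAB) hB⟩

theorem isHRectifiable_of_hausdorffMeasure_eq_zero (hA : μH[(s : ℝ)] A = 0) :
    IsHRectifiable s A :=
  ⟨fun _ _ => 0, fun _ => ⟨0, LipschitzWith.const 0⟩, measure_mono_null sdiff_subset hA⟩

theorem isHRectifiable_of_subset_range {g : (Fin s → ℝ) → (Fin m → ℝ)} {K : ℝ≥0}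
    (hg : LipschitzWith K g) (hA : A ⊆ range g) : IsHRectifiable s A :=
  ⟨fun _ => g, fun _ => ⟨K, hg⟩, by rw [iUnion_const, sdiff_eq_empty.2 hA, measure_empty]⟩

theorem IsHRectifiable.iUnion {ι : Type*} [Countable ι] {A : ι → Set (Fin m → ℝ)}
    (hA : ∀ i, IsHRectifiable s (A i)) : IsHRectifiable s (⋃ i, A i) := by
  cases isEmpty_or_nonempty ι
  · exact isHRectifiable_of_hausdorffMeasure_eq_zero (by simp)
  choose g hg hgA using hA
  obtain ⟨e, he⟩ := exists_surjective_nat ι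
  refine ⟨fun n => g (e n.unpair.1) n.unpair.2, fun n => hg _ _, ?_⟩
  refine measure_mono_null (fun x ⟨hxA, hxg⟩ => ?_) (measure_iUnion_null hgA)
  obtain ⟨i, hi⟩ := mem_iUnion.1 hxA
  obtain ⟨a, rfl⟩ := he i
  refine mem_iUnion.2 ⟨e a, hi, fun hx => hxg ?_⟩
  obtain ⟨b, hb⟩ := mem_iUnion.1 hx
  exact mem_iUnion.2 ⟨Nat.pair a b, by simpa using hb⟩

theorem IsHRectifiable.union (hA : IsHRectifiable s A) (hB : IsHRectifiable s B) :
    IsHRectifiable s (A ∪ B) := by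
  rw [union_eq_iUnion]
  exact .iUnion fun b => by cases b <;> assumption

end IsHRectifiable

theorem dist_update_apply_eq_dist_removeNth {M : ℕ} (j : Fin (M + 1)) (x z : Fin (M + 1) → ℝ) :
    dist (Function.update x j (z j)) z = dist (j.removeNth x) (j.removeNth z) := by
  calc dist (Function.update x j (z j)) z
      = dist (Fin.insertNth (α := fun _ => ℝ) j (z j) (j.removeNth x))
          (Fin.insertNth (α := fun _ => ℝ) j (z j) (j.removeNth z)) := by
        rw [Fin.insertNth_removeNth, Fin.insertNth_self_removeNth]
    _ = dist (j.removeNth x) (j.removeNth z) := by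
        rw [Fin.dist_insertNth_insertNth, dist_self, max_eq_right dist_nonneg]

theorem isHRectifiable_of_dist_apply_le {M : ℕ} (j : Fin (M + 1)) {S : Set (Fin (M + 1) → ℝ)}
    {L : ℝ≥0} (hS : ∀ x ∈ S, ∀ z ∈ S, dist (x j) (z j) ≤ L * dist (j.removeNth x) (j.removeNth z)) :
    IsHRectifiable M S := by
  set φ := Function.invFunOn (Fin.removeNth j) S
  have hφ : ∀ x ∈ S, φ (j.removeNth x) ∈ S ∧ j.removeNth (φ (j.removeNth x)) = j.removeNth x :=
    fun x hx => ⟨Function.invFunOn_mem ⟨x, hx, rfl⟩, Function.invFunOn_eq ⟨x, hx, rfl⟩⟩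
  have hlip : LipschitzOnWith L (fun u => φ u j) (Fin.removeNth j '' S) := by
    refine LipschitzOnWith.of_dist_le_mul ?_
    rintro _ ⟨x, hx, rfl⟩ _ ⟨z, hz, rfl⟩
    simpa only [(hφ x hx).2, (hφ z hz).2] using hS _ (hφ x hx).1 _ (hφ z hz).1
  obtain ⟨H, hH, hHφ⟩ := hlip.extend_real
  have hg : LipschitzWith (max L 1) fun u => Fin.insertNth (α := fun _ => ℝ) j (H u) u := by
    refine LipschitzWith.of_dist_le_mul fun u v => ?_
    rw [Fin.dist_insertNth_insertNth, NNReal.coe_max, NNReal.coe_one,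
      max_mul_of_nonneg _ _ dist_nonneg]
    exact max_le_max (hH.dist_le_mul u v) (one_mul _).ge
  refine isHRectifiable_of_subset_range hg fun x hx => ⟨j.removeNth x, ?_⟩
  have hxj : H (j.removeNth x) = x j := by
    rw [← hHφ (mem_image_of_mem _ hx)]
    have := hS _ (hφ x hx).1 x hx
    rwa [(hφ x hx).2, dist_self, mul_zero, dist_le_zero] at this
  simp only [hxj, Fin.insertNth_self_removeNth]

theorem exists_nat_le_add_one_and_inv_lt (C : ℝ) {δ : ℝ} (hδ : 0 < δ) :
    ∃ n : ℕ, C ≤ n + 1 ∧ (n + 1 : ℝ)⁻¹ < δ := by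
  obtain ⟨n, hn⟩ := exists_nat_gt (max C δ⁻¹)
  exact ⟨n, by linarith [le_max_left C δ⁻¹],
    inv_lt_of_inv_lt₀ hδ (by linarith [le_max_right C δ⁻¹])⟩

def coordGrowthSet {n : ℕ} (F : (Fin n → ℝ) → ℝ) (j : Fin n) (k : ℕ) : Set (Fin n → ℝ) :=
  {x | ∀ a : ℝ, |a - x j| ≤ (k + 1 : ℝ)⁻¹ → |a - x j| ≤ (k + 1) * |F (Function.update x j a) - F x|}

theorem exists_mem_coordGrowthSet {n : ℕ} {F : (Fin n → ℝ) → ℝ} {D : (Fin n → ℝ) →L[ℝ] ℝ}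
    {x : Fin n → ℝ} (hF : HasFDerivAt F D x) (hD : D ≠ 0) :
    ∃ j k, x ∈ coordGrowthSet F j k := by
  obtain ⟨j, hj⟩ : ∃ j, D (Pi.single j 1) ≠ 0 := by
    by_contra! h
    refine hD (ContinuousLinearMap.coe_injective (LinearMap.pi_ext fun i a => ?_))
    have hsingle : (Pi.single i a : Fin n → ℝ) = a • Pi.single i 1 := by
      rw [← Pi.single_smul, smul_eq_mul, mul_one]
    simp [hsingle, h i]
  have hg : HasDerivAt (fun t => F (Function.update x j t)) (D (Pi.single j 1)) (x j) := by
    have hF' : HasFDerivAt F D (Function.update x j (x j)) := by rwa [Function.update_eq_self]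
    exact hF'.comp_hasDerivAt (x j) (hasDerivAt_update x j (x j))
  obtain ⟨C, hC⟩ := (hg.isTheta_sub hj).isBigO_symm.bound
  rw [Filter.prod_pure, eventually_map, Metric.eventually_nhds_iff] at hC
  obtain ⟨ρ, hρ, hball⟩ := hC
  obtain ⟨k, hkC, hkρ⟩ := exists_nat_le_add_one_and_inv_lt C hρ
  refine ⟨j, k, fun a ha => ?_⟩
  have h := hball (show dist a (x j) < ρ from (Real.dist_eq _ _).trans_lt (ha.trans_lt hkρ))
  simp only [Function.update_eq_self, Real.norm_eq_abs] at h
  exact h.trans (by gcongr)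

theorem LipschitzWith.isHRectifiable_coordGrowthSet_inter {M : ℕ} {F : (Fin (M + 1) → ℝ) → ℝ}
    {K : ℝ≥0} (hF : LipschitzWith K F) (j : Fin (M + 1)) (k : ℕ) {T : Set (Fin (M + 1) → ℝ)}
    (hT : ∀ x ∈ T, ∀ z ∈ T, dist x z ≤ (k + 1 : ℝ)⁻¹) (y : ℝ) :
    IsHRectifiable M (coordGrowthSet F j k ∩ T ∩ F ⁻¹' {y}) := by
  refine isHRectifiable_of_dist_apply_le j (L := (k + 1) * K) ?_
  rintro x ⟨⟨hxG, hxT⟩, hxy⟩ z ⟨⟨-, hzT⟩, hzy⟩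
  have hzx : |z j - x j| ≤ (k + 1 : ℝ)⁻¹ :=
    (Real.dist_eq _ _).symm.trans_le ((dist_le_pi_dist z x j).trans (hT z hzT x hxT))
  -- `F x = F z`, and `update x j (z j)` differs from `z` only off the `j`-th coordinate.
  calc dist (x j) (z j) = |z j - x j| := by rw [Real.dist_eq, abs_sub_comm]
    _ ≤ (k + 1) * |F (Function.update x j (z j)) - F x| := hxG _ hzx
    _ = (k + 1) * dist (F (Function.update x j (z j))) (F z) := by
        rw [Real.dist_eq, hxy, hzy]
    _ ≤ (k + 1) * (K * dist (Function.update x j (z j)) z) := by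
        gcongr; exact hF.dist_le_mul _ _
    _ = ((k + 1 : ℝ≥0) * K : ℝ≥0) * dist (j.removeNth x) (j.removeNth z) := by
        rw [dist_update_apply_eq_dist_removeNth]; push_cast; ring

theorem hausdorffMeasure_pi_real_succ (M : ℕ) :
    (μH[(M : ℝ) + 1] : Measure (Fin (M + 1) → ℝ)) = volume := by
  simpa using hausdorffMeasure_pi_real (ι := Fin (M + 1))

theorem ae_hausdorffMeasure_setOf_hasFDerivAt_zero_inter_preimage_eq_zero {M : ℕ} (hM : 0 < M)
    (F : (Fin (M + 1) → ℝ) → ℝ) :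
    ∀ᵐ y, μH[M] ({x | HasFDerivAt F (0 : (Fin (M + 1) → ℝ) →L[ℝ] ℝ) x} ∩ F ⁻¹' {y}) = 0 := by
  have hball : ∀ n : ℕ, ∀ᵐ y, μH[M] ({x | HasFDerivAt F (0 : (Fin (M + 1) → ℝ) →L[ℝ] ℝ) x} ∩
      closedBall 0 n ∩ F ⁻¹' {y}) = 0 := fun n =>
    ae_hausdorffMeasure_inter_preimage_eq_zero_of_hasFDerivAt_zero (Nat.cast_pos.2 hM)
      (fun x hx => hx.1) (by
        rw [hausdorffMeasure_pi_real_succ]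
        exact ((measure_mono inter_subset_right).trans_lt measure_closedBall_lt_top).ne)
  filter_upwards [ae_all_iff.2 hball] with y hy
  refine measure_mono_null (fun x ⟨hx, hxy⟩ => ?_) (measure_iUnion_null hy)
  obtain ⟨n, hn⟩ := mem_iUnion.1 ((iUnion_closedBall_nat (0 : Fin (M + 1) → ℝ)).ge (mem_univ x))
  exact mem_iUnion.2 ⟨n, ⟨hx, hn⟩, hxy⟩

theorem LipschitzWith.isHRectifiable_inter_preimage_of_fderiv_ne_zero {M : ℕ}
    {F : (Fin (M + 1) → ℝ) → ℝ} {K : ℝ≥0} (hF : LipschitzWith K F) (y : ℝ) :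
    IsHRectifiable M
      ({x | ∃ D : (Fin (M + 1) → ℝ) →L[ℝ] ℝ, D ≠ 0 ∧ HasFDerivAt F D x} ∩ F ⁻¹' {y}) := by
  set c := TopologicalSpace.denseSeq (Fin (M + 1) → ℝ)
  have hsmall : ∀ (k l : ℕ), ∀ x ∈ ball (c l) ((k + 1 : ℝ)⁻¹ / 2),
      ∀ z ∈ ball (c l) ((k + 1 : ℝ)⁻¹ / 2), dist x z ≤ (k + 1 : ℝ)⁻¹ := fun k l x hx z hz =>
    (dist_le_diam_of_mem isBounded_ball hx hz).trans
      ((diam_ball (by positivity)).trans_eq (mul_div_cancel₀ _ two_ne_zero))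
  have hG : IsHRectifiable M (⋃ p : Fin (M + 1) × ℕ × ℕ,
      coordGrowthSet F p.1 p.2.1 ∩ ball (c p.2.2) ((p.2.1 + 1 : ℝ)⁻¹ / 2) ∩ F ⁻¹' {y}) :=
    .iUnion fun p => hF.isHRectifiable_coordGrowthSet_inter p.1 p.2.1 (hsmall p.2.1 p.2.2) y
  refine hG.mono fun x ⟨⟨D, hD, hFD⟩, hxy⟩ => ?_
  obtain ⟨j, k, hjk⟩ := exists_mem_coordGrowthSet hFD hD
  obtain ⟨l, hl⟩ := (TopologicalSpace.denseRange_denseSeq (Fin (M + 1) → ℝ)).exists_dist_lt x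
    (by positivity : (0 : ℝ) < (k + 1 : ℝ)⁻¹ / 2)
  exact mem_iUnion.2 ⟨(j, k, l), ⟨hjk, mem_ball.2 hl⟩, hxy⟩

theorem LipschitzWith.ae_isHRectifiable_preimage {M : ℕ} (hM : 0 < M)
    {F : (Fin (M + 1) → ℝ) → ℝ} {K : ℝ≥0} (hF : LipschitzWith K F) :
    ∀ᵐ y, IsHRectifiable M (F ⁻¹' {y}) := by
  have hsingular : ∀ᵐ y, μH[M] ({x | ¬ DifferentiableAt ℝ F x} ∩ F ⁻¹' {y}) = 0 :=
    hF.ae_hausdorffMeasure_inter_preimage_eq_zero (Nat.cast_pos.2 hM)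
      (by rw [hausdorffMeasure_pi_real_succ]; exact ae_iff.1 hF.ae_differentiableAt)
  filter_upwards [hsingular, ae_hausdorffMeasure_setOf_hasFDerivAt_zero_inter_preimage_eq_zero hM F]
    with y hsingular hcritical
  refine (((isHRectifiable_of_hausdorffMeasure_eq_zero hsingular).union
    (isHRectifiable_of_hausdorffMeasure_eq_zero hcritical)).union
    (hF.isHRectifiable_inter_preimage_of_fderiv_ne_zero y)).mono fun x hxy => ?_
  by_cases hdiff : DifferentiableAt ℝ F x
  · by_cases h0 : fderiv ℝ F x = 0
    · exact .inl (.inr ⟨show HasFDerivAt F 0 x from h0 ▸ hdiff.hasFDerivAt, hxy⟩)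
    · exact .inr ⟨⟨_, h0, hdiff.hasFDerivAt⟩, hxy⟩
  · exact .inl (.inl ⟨hdiff, hxy⟩)

theorem exists_dist_le_mul_of_upperScaledOsc_lt_top {E F : Type*} [MetricSpace E]
    [PseudoMetricSpace F] {A : Set E} {f : E → F} {x : E} (h : upperScaledOsc A f x < ⊤) :
    ∃ C δ : ℝ, 0 < δ ∧ ∀ z ∈ A, dist z x < δ → dist (f z) (f x) ≤ C * dist z x := by
  obtain ⟨N, hN⟩ := ENNReal.exists_nat_gt h.ne
  obtain ⟨δ, hδ, hratio⟩ := (nhdsGT_basis (0 : ℝ)).eventually_iff.1 (eventually_lt_of_limsup_lt hN)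
  refine ⟨N, δ, hδ, fun z hz hzx => ?_⟩
  rcases (dist_nonneg (x := z) (y := x)).eq_or_lt with h0 | hpos
  · rw [dist_eq_zero.1 h0.symm, dist_self, dist_self, mul_zero]
  have hlt := hratio ⟨hpos, hzx⟩
  rw [ENNReal.div_lt_iff (.inl (ENNReal.ofReal_pos.2 hpos).ne') (.inl ENNReal.ofReal_ne_top)] at hlt
  have hle : ENNReal.ofReal (dist (f z) (f x)) ≤
      ⨆ (y : E) (_ : y ∈ A) (_ : dist y x ≤ dist z x), ENNReal.ofReal (dist (f y) (f x)) :=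
    le_iSup₂_of_le z hz (le_iSup_of_le le_rfl le_rfl)
  rw [← ENNReal.ofReal_natCast, ← ENNReal.ofReal_mul N.cast_nonneg] at hlt
  exact ((ENNReal.ofReal_lt_ofReal_iff_of_nonneg dist_nonneg).1 (hle.trans_lt hlt)).le

theorem exists_lipschitzOnWith_cover_of_upperScaledOsc_lt_top {E F : Type*} [MetricSpace E]
    [TopologicalSpace.SeparableSpace E] [Nonempty E] [PseudoMetricSpace F] {A : Set E}
    {f : E → F} (hf : ∀ x ∈ A, upperScaledOsc A f x < ⊤) :
    ∃ P : ℕ → Set E, ⋃ i, P i = A ∧ ∀ i, ∃ K, LipschitzOnWith K f (P i) := by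
  set G : ℕ → Set E := fun n =>
    {x ∈ A | ∀ z ∈ A, dist z x < (n + 1 : ℝ)⁻¹ → dist (f z) (f x) ≤ (n + 1) * dist z x}
  set c := TopologicalSpace.denseSeq E
  refine ⟨fun i => G i.unpair.1 ∩ ball (c i.unpair.2) ((i.unpair.1 + 1 : ℝ)⁻¹ / 2),
    Subset.antisymm (iUnion_subset fun i x hx => hx.1.1) fun x hx => ?_,
    fun i => ⟨i.unpair.1 + 1, LipschitzOnWith.of_dist_le_mul ?_⟩⟩
  · obtain ⟨C, δ, hδ, hC⟩ := exists_dist_le_mul_of_upperScaledOsc_lt_top (hf x hx)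
    obtain ⟨n, hnC, hnδ⟩ := exists_nat_le_add_one_and_inv_lt C hδ
    obtain ⟨l, hl⟩ := (TopologicalSpace.denseRange_denseSeq E).exists_dist_lt x
      (by positivity : (0 : ℝ) < (n + 1 : ℝ)⁻¹ / 2)
    refine mem_iUnion.2 ⟨Nat.pair n l, ?_⟩
    simp only [Nat.unpair_pair]
    exact ⟨⟨hx, fun z hz hzx => (hC z hz (hzx.trans hnδ)).trans (by gcongr)⟩, hl⟩
  · rintro x ⟨hxG, hx⟩ z ⟨hzG, hz⟩
    have hxz : dist x z < (i.unpair.1 + 1 : ℝ)⁻¹ :=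
      (dist_triangle_right x z _).trans_lt ((add_lt_add hx hz).trans_eq (add_halves _))
    push_cast
    exact hzG.2 x hxG.1 hxz

/-- If `m ≥ 2` and `f : [0,1]^m → ℝ` has finite upper-scaled oscillation at every
point, then for Lebesgue-a.e. `y ∈ ℝ` the level set `f⁻¹(y)` is `(m-1)`-rectifiable
and has σ-finite `H^{m-1}` measure. -/
theorem stmt11 (m : ℕ) (hm : 2 ≤ m) (f : (Fin m → ℝ) → ℝ)
    (hL : ∀ x ∈ Set.Icc (0 : Fin m → ℝ) 1, upperScaledOsc (Set.Icc 0 1) f x < ⊤) :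
    ∀ᵐ y ∂(volume : Measure ℝ),
      IsHRectifiable (m - 1) (Set.Icc (0 : Fin m → ℝ) 1 ∩ f ⁻¹' {y}) ∧
      ∃ s : ℕ → Set (Fin m → ℝ),
        (Set.Icc (0 : Fin m → ℝ) 1 ∩ f ⁻¹' {y} ⊆ ⋃ n, s n) ∧
        (∀ n, μH[(m : ℝ) - 1] (s n) < ⊤) := by
  obtain ⟨M, rfl⟩ : ∃ M, m = M + 1 := ⟨m - 1, by omega⟩
  have hM : 0 < M := by omega
  obtain ⟨P, hPA, hPf⟩ := exists_lipschitzOnWith_cover_of_upperScaledOsc_lt_top hL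
  choose K hK using hPf
  choose F hF hfF using fun i => (hK i).extend_real
  have hPfin : ∀ i, μH[(M : ℝ) + 1] (P i) ≠ ⊤ := fun i => by
    rw [hausdorffMeasure_pi_real_succ]
    exact ne_top_of_le_ne_top isCompact_Icc.measure_lt_top.ne
      (measure_mono (hPA ▸ subset_iUnion P i))
  have hlevel : ∀ y, Icc 0 1 ∩ f ⁻¹' {y} = ⋃ i, P i ∩ F i ⁻¹' {y} := fun y => by
    rw [← hPA, iUnion_inter]
    exact iUnion_congr fun i => (hfF i).inter_preimage_eq {y}
  filter_upwards [ae_all_iff.2 fun i => (hF i).ae_isHRectifiable_preimage hM,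
    ae_all_iff.2 fun i => (hF i).ae_hausdorffMeasure_inter_preimage_lt_top (Nat.cast_pos.2 hM)
      (hPfin i)] with y hrect hfin
  have hexp : ((M + 1 : ℕ) : ℝ) - 1 = M := by push_cast; ring
  rw [hlevel y, hexp]
  exact ⟨.iUnion fun i => (hrect i).mono inter_subset_right, fun i => P i ∩ F i ⁻¹' {y},
    subset_rfl, hfin⟩
end

section
/- Let g : [0,1] → [0,1] be defined by g(x) = x·sin²(1/x) for x ∈ (0,1] and g(0) = 0. Then the upper-scaled oscillation L_g(x) is finite for every x ∈ [0,1], and the graph {(x, g(x)) : x ∈ [0,1]} ⊂ ℝ² has infinite 1-dimensional Hausdorff measure. -/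
/-!
Near `x > 0` the function `g` is Lipschitz with constant `1 + 4 / x` (`sin²` is `2`-Lipschitz
and `t ↦ 1/t` is `2/x²`-Lipschitz on `[x/2, ∞)`), and near `0` we have `|g y| ≤ |y|`; hence
`L_g` is finite. On `[1/((k+1)π + π/2), 1/((k+1)π)]` the function climbs from `0` to
`1/((k+1)π + π/2)`. Projecting to the second coordinate is `1`-Lipschitz, so by the intermediate
value theorem the piece of the graph over this interval has `H¹` measure at least that height.
The pieces are disjoint and the heights form a divergent harmonic-type series.
-/

open Set MeasureTheory Metric Filter
open scoped ENNReal NNReal Topology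

open Real

section ScaledOscillation

variable {E F : Type*} [PseudoMetricSpace E] [PseudoMetricSpace F]

theorem upperScaledOsc_congr {A : Set E} {f f' : E → F} {x : E} (h : EqOn f f' A)
    (hx : x ∈ A) : upperScaledOsc A f x = upperScaledOsc A f' x := by
  unfold upperScaledOsc
  congr with r
  congr 1
  refine iSup_congr fun y => iSup_congr fun hy => ?_
  rw [h hy, h hx]

theorem upperScaledOsc_le_of_dist_le {A : Set E} {f : E → F} {x : E} {C : ℝ≥0} {δ : ℝ}
    (hδ : 0 < δ) (h : ∀ y ∈ A, dist y x < δ → dist (f y) (f x) ≤ C * dist y x) :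
    upperScaledOsc A f x ≤ C := by
  refine limsup_le_of_le (by isBoundedDefault) ?_
  filter_upwards [Ioo_mem_nhdsGT hδ] with r ⟨hr0, hrδ⟩
  refine ENNReal.div_le_of_le_mul (iSup₂_le fun y hy => iSup_le fun hyx => ?_)
  rw [← ENNReal.ofReal_coe_nnreal, ← ENNReal.ofReal_mul C.coe_nonneg]
  refine ENNReal.ofReal_le_ofReal ((h y hy (hyx.trans_lt hrδ)).trans ?_)
  gcongr

end ScaledOscillation

theorem abs_sin_sq_sub_sin_sq_le (a b : ℝ) :
    |sin a ^ 2 - sin b ^ 2| ≤ 2 * |a - b| := by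
  have hsum : |sin a + sin b| ≤ 2 :=
    (abs_add_le _ _).trans (by linarith [abs_sin_le_one a, abs_sin_le_one b])
  calc |sin a ^ 2 - sin b ^ 2|
      = |sin a - sin b| * |sin a + sin b| := by rw [← abs_mul]; ring_nf
    _ ≤ |a - b| * 2 := mul_le_mul (abs_sin_sub_sin_le a b) hsum (abs_nonneg _) (abs_nonneg _)
    _ = 2 * |a - b| := mul_comm _ _

theorem abs_inv_sub_inv_le_of_half_le {x y : ℝ} (hx : 0 < x) (hxy : x / 2 ≤ y) :
    |y⁻¹ - x⁻¹| ≤ 2 / x ^ 2 * |y - x| := by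
  have hy : 0 < y := by linarith
  rw [inv_sub_inv hy.ne' hx.ne', abs_div, abs_sub_comm, abs_of_pos (mul_pos hy hx),
    div_le_iff₀ (mul_pos hy hx)]
  calc |y - x| = 2 / x ^ 2 * |y - x| * (x * (x / 2)) := by field_simp
    _ ≤ 2 / x ^ 2 * |y - x| * (y * x) := by
        have : x * (x / 2) ≤ y * x := by nlinarith
        gcongr

-- As `0⁻¹ = 0`, this vanishes at `0` and so agrees with `g` on all of `[0, 1]`.
noncomputable def xSinSqInv (t : ℝ) : ℝ := t * sin t⁻¹ ^ 2

theorem xSinSqInv_zero : xSinSqInv 0 = 0 := by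
  simp [xSinSqInv]

theorem abs_xSinSqInv_le (t : ℝ) : |xSinSqInv t| ≤ |t| := by
  rw [xSinSqInv, abs_mul, abs_of_nonneg (sq_nonneg (sin t⁻¹))]
  exact mul_le_of_le_one_right (abs_nonneg t) (sin_sq_le_one _)

theorem abs_xSinSqInv_sub_le {x y : ℝ} (hx : 0 < x) (hxy : x / 2 ≤ y) :
    |xSinSqInv y - xSinSqInv x| ≤ (1 + 4 / x) * |y - x| := by
  calc |xSinSqInv y - xSinSqInv x|
      = |(y - x) * sin y⁻¹ ^ 2 + x * (sin y⁻¹ ^ 2 - sin x⁻¹ ^ 2)| := by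
        rw [xSinSqInv, xSinSqInv]; ring_nf
    _ ≤ |y - x| * 1 + x * (2 * (2 / x ^ 2 * |y - x|)) := by
        refine (abs_add_le _ _).trans (add_le_add ?_ ?_)
        · rw [abs_mul, abs_of_nonneg (sq_nonneg (sin y⁻¹))]
          gcongr
          exact sin_sq_le_one _
        · rw [abs_mul, abs_of_pos hx]
          gcongr
          exact (abs_sin_sq_sub_sin_sq_le _ _).trans
            (by gcongr; exact abs_inv_sub_inv_le_of_half_le hx hxy)
    _ = (1 + 4 / x) * |y - x| := by field_simp; ring

theorem upperScaledOsc_xSinSqInv_lt_top (A : Set ℝ) {x : ℝ} (hx : 0 ≤ x) :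
    upperScaledOsc A xSinSqInv x < ⊤ := by
  rcases hx.eq_or_lt with rfl | hx
  · refine (upperScaledOsc_le_of_dist_le (C := 1) one_pos fun y _ _ => ?_).trans_lt
      ENNReal.coe_lt_top
    simpa [dist_eq, xSinSqInv_zero] using abs_xSinSqInv_le y
  · refine (upperScaledOsc_le_of_dist_le (C := ⟨1 + 4 / x, by positivity⟩) (half_pos hx)
      fun y _ hyx => ?_).trans_lt ENNReal.coe_lt_top
    rw [dist_eq] at hyx ⊢
    exact abs_xSinSqInv_sub_le hx (by linarith [neg_abs_le (y - x)])

theorem ofReal_abs_sub_le_hausdorffMeasure_graph {f : ℝ → ℝ} {a b : ℝ}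
    (hf : ContinuousOn f (uIcc a b)) :
    ENNReal.ofReal |f b - f a| ≤ μH[1] ((fun x => (x, f x)) '' uIcc a b) :=
  calc ENNReal.ofReal |f b - f a|
      = μH[1] (uIcc (f a) (f b)) := by rw [hausdorffMeasure_real, volume_interval]
    _ ≤ μH[1] (f '' uIcc a b) := measure_mono (intermediate_value_uIcc hf)
    _ = μH[1] (Prod.snd '' ((fun x => (x, f x)) '' uIcc a b)) := by rw [image_image]
    _ ≤ μH[1] ((fun x => (x, f x)) '' uIcc a b) := by
        simpa using
          (LipschitzWith.prod_snd (α := ℝ) (β := ℝ)).hausdorffMeasure_image_le zero_le_one _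

theorem hausdorffMeasure_graph_eq_top_of_not_summable {f : ℝ → ℝ} {s : Set ℝ}
    {a b : ℕ → ℝ}
    (hf : ∀ k, ContinuousOn f (uIcc (a k) (b k))) (hs : ∀ k, uIcc (a k) (b k) ⊆ s)
    (hdisj : Pairwise (Function.onFun Disjoint fun k => uIcc (a k) (b k)))
    (hdiv : ¬Summable fun k => |f (b k) - f (a k)|) :
    μH[1] ((fun x => (x, f x)) '' s) = ⊤ := by
  have hinj : Function.Injective fun x => (x, f x) := fun x y h => congrArg Prod.fst h
  have hsum : ∑' k, ENNReal.ofReal |f (b k) - f (a k)| = ⊤ := by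
    by_contra h
    exact hdiv (by simpa using ENNReal.summable_toReal h)
  refine top_unique ?_
  calc ⊤ = ∑' k, ENNReal.ofReal |f (b k) - f (a k)| := hsum.symm
    _ ≤ ∑' k, μH[1] ((fun x => (x, f x)) '' uIcc (a k) (b k)) :=
        ENNReal.tsum_le_tsum fun k => ofReal_abs_sub_le_hausdorffMeasure_graph (hf k)
    _ = μH[1] (⋃ k, (fun x => (x, f x)) '' uIcc (a k) (b k)) :=
        (measure_iUnion (fun k l hkl => (disjoint_image_iff hinj).2 (hdisj hkl)) fun k =>
          (isCompact_uIcc.image_of_continuousOn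
            (continuousOn_id.prodMk (hf k))).measurableSet).symm
    _ ≤ μH[1] ((fun x => (x, f x)) '' s) :=
        measure_mono (iUnion_subset fun k => image_mono (hs k))

theorem continuousOn_xSinSqInv : ContinuousOn xSinSqInv {0}ᶜ := by
  exact continuousOn_id.mul ((continuous_sin.comp_continuousOn continuousOn_inv₀).pow 2)

theorem xSinSqInv_inv_of_sin_eq_zero {t : ℝ} (h : sin t = 0) : xSinSqInv t⁻¹ = 0 := by
  simp [xSinSqInv, h]

theorem xSinSqInv_inv_of_cos_eq_zero {t : ℝ} (h : cos t = 0) : xSinSqInv t⁻¹ = t⁻¹ := by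
  simp [xSinSqInv, sin_sq, h]

theorem not_summable_inv_nat_succ_mul_pi_add_pi_div_two :
    ¬Summable fun k : ℕ => (((k + 1 : ℕ) : ℝ) * π + π / 2)⁻¹ := by
  have hshift : (fun k : ℕ => (((k + 1 : ℕ) : ℝ) * π + π / 2)⁻¹) =
      fun k : ℕ => π⁻¹ * (1 / |(k : ℝ) + 3 / 2| ^ (1 : ℝ)) := by
    ext k
    rw [rpow_one, abs_of_pos (by positivity)]
    push_cast
    field_simp
    ring
  rw [hshift, summable_mul_left_iff (inv_ne_zero pi_ne_zero), summable_one_div_nat_add_rpow]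
  exact lt_irrefl 1

theorem hausdorffMeasure_graph_xSinSqInv_eq_top :
    μH[1] ((fun x => (x, xSinSqInv x)) '' Icc 0 1) = ⊤ := by
  set c : ℕ → ℝ := fun k => ((k + 1 : ℕ) : ℝ) * π with hc
  have hπ_le : ∀ k, π ≤ c k := fun k => le_mul_of_one_le_left pi_pos.le (by simp)
  have hc_pos : ∀ k, 0 < c k := fun k => pi_pos.trans_le (hπ_le k)
  have hb_pos : ∀ k, 0 < (c k + π / 2)⁻¹ := fun k =>
    inv_pos.2 (by linarith [hc_pos k, pi_pos])
  have hlt : ∀ k, (c k + π / 2)⁻¹ < (c k)⁻¹ := fun k =>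
    inv_strictAnti₀ (hc_pos k) (by linarith [pi_pos])
  have huIcc : ∀ k, uIcc (c k)⁻¹ (c k + π / 2)⁻¹ = Icc (c k + π / 2)⁻¹ (c k)⁻¹ :=
    fun k => uIcc_of_ge (hlt k).le
  have hsin : ∀ k, sin (c k) = 0 := fun k => sin_nat_mul_pi _
  have hcos : ∀ k, cos (c k + π / 2) = 0 := fun k => by
    rw [cos_add_pi_div_two, hsin, neg_zero]
  refine hausdorffMeasure_graph_eq_top_of_not_summable (a := fun k => (c k)⁻¹)
    (b := fun k => (c k + π / 2)⁻¹) (fun k => ?_) (fun k => ?_) ?_ ?_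
  · rw [huIcc]
    exact continuousOn_xSinSqInv.mono fun x hx => ((hb_pos k).trans_le hx.1).ne'
  · have h_le_one : (c k)⁻¹ ≤ 1 :=
      inv_le_one_of_one_le₀ (by linarith [pi_gt_three, hπ_le k])
    exact uIcc_subset_Icc ⟨(inv_pos.2 (hc_pos k)).le, h_le_one⟩
      ⟨(hb_pos k).le, (hlt k).le.trans h_le_one⟩
  · refine (pairwise_disjoint_on _).2 fun k l hkl => ?_
    have hcl : c k + π / 2 < c l := by
      have : ((k + 1 : ℕ) : ℝ) + 1 ≤ ((l + 1 : ℕ) : ℝ) := by norm_cast; omega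
      simp only [hc]
      nlinarith [pi_pos]
    rw [huIcc, huIcc, disjoint_left]
    exact fun x hxk hxl =>
      (inv_strictAnti₀ (inv_pos.1 (hb_pos k)) hcl).not_ge (hxk.1.trans hxl.2)
  · simpa only [xSinSqInv_inv_of_sin_eq_zero (hsin _), xSinSqInv_inv_of_cos_eq_zero (hcos _),
      sub_zero, abs_of_pos (hb_pos _)] using not_summable_inv_nat_succ_mul_pi_add_pi_div_two

/-- For `g(x) = x sin²(1/x)` (with `g 0 = 0`), the upper-scaled oscillation of `g` is
finite at every point of `[0,1]`, and the graph of `g` over `[0,1]` has infinite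
`H^1` measure. -/
theorem stmt12 (g : ℝ → ℝ) (hg0 : g 0 = 0)
    (hg : ∀ x ∈ Set.Ioc (0:ℝ) 1, g x = x * Real.sin x⁻¹ ^ 2) :
    (∀ x ∈ Set.Icc (0:ℝ) 1, upperScaledOsc (Set.Icc 0 1) g x < ⊤) ∧
    μH[1] ((fun x => (x, g x)) '' Set.Icc (0:ℝ) 1 : Set (ℝ × ℝ)) = ⊤ := by
  have hgG : EqOn g xSinSqInv (Icc 0 1) := by
    intro x hx
    rcases hx.1.eq_or_lt with rfl | hx0
    · rw [hg0, xSinSqInv_zero]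
    · exact hg x ⟨hx0, hx.2⟩
  refine ⟨fun x hx => ?_, ?_⟩
  · rw [upperScaledOsc_congr hgG hx]
    exact upperScaledOsc_xSinSqInv_lt_top _ hx.1
  · rw [image_congr fun x hx => congrArg (x, ·) (hgG hx)]
    exact hausdorffMeasure_graph_xSinSqInv_eq_top
end

section
/- Let s ≥ 1 be an integer, and let A ⊂ ℝ^m be an H^s-measurable set with 0 < H^s(A) < ∞. Suppose that for every x ∈ A there exists a sequence of radii r_n → 0⁺ such that A ∩ B(x, 2r_n) = A ∩ B(x, r_n) for every n. Then A is not s-rectifiable. -/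
/-!
If `A` were rectifiable, some Lipschitz `f : ℝ^s → ℝ^m` would have `H^s(f(f⁻¹ A)) > 0`. By
Rademacher's theorem, the Lebesgue density theorem, and the fact that `f` maps the set where
its derivative vanishes to an `H^s`-null set, there is then a density point `y` of `f⁻¹ A`
at which `f` has a nonzero derivative `L`. Blowing up at `y` at the scales `r_n`, `f` maps a
fixed open set of directions (those `w` with `5/4 < ‖L w‖ < 7/4`) into the annulus
`r_n < |· - f y| < 2 r_n`, which misses `A`; so `f⁻¹ A` misses a fixed proportion of the
balls around `y`, contradicting density one.
-/

open Set MeasureTheory Metric Filter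
open scoped ENNReal NNReal Topology

open scoped Pointwise

section Density

variable {E F : Type*} [NormedAddCommGroup E] [NormedSpace ℝ E]
  [NormedAddCommGroup F] [NormedSpace ℝ F]

theorem HasFDerivAt.eventually_norm_sub_smul_le {f : E → F} {L : E →L[ℝ] F} {y : E}
    (hf : HasFDerivAt f L y) {R η : ℝ} (hR : 0 < R) (hη : 0 < η) :
    ∀ᶠ r in 𝓝[>] (0 : ℝ), ∀ w ∈ closedBall (0 : E) R,
      ‖f (y + r • w) - f y - r • L w‖ ≤ η * r := by
  obtain ⟨δ, hδ, hlo⟩ := Metric.eventually_nhds_iff.1 (hf.isLittleO.def (div_pos hη hR))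
  filter_upwards [Ioo_mem_nhdsGT (div_pos hδ hR)] with r ⟨hr0, hrδ⟩ w hw
  rw [mem_closedBall_zero_iff] at hw
  have hrw : ‖r • w‖ ≤ r * R := by
    rw [norm_smul, Real.norm_of_nonneg hr0.le]
    exact mul_le_mul_of_nonneg_left hw hr0.le
  have hnear : dist (y + r • w) y < δ := by
    rw [dist_eq_norm, add_sub_cancel_left]
    calc ‖r • w‖ ≤ r * R := hrw
      _ < δ := (lt_div_iff₀ hR).1 hrδ
  calc ‖f (y + r • w) - f y - r • L w‖ ≤ η / R * ‖r • w‖ := by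
        simpa [map_smul] using hlo hnear
    _ ≤ η / R * (r * R) := by gcongr
    _ = η * r := by field_simp

variable [FiniteDimensional ℝ E] [MeasurableSpace E] [BorelSpace E]
  (μ : Measure E) [μ.IsAddHaarMeasure]

theorem not_tendsto_density_preimage_of_gap {f : E → F} {L : E →L[ℝ] F} {y : E}
    (hf : HasFDerivAt f L y) (hL : L ≠ 0) {A : Set F} {r : ℕ → ℝ}
    (hr : Tendsto r atTop (𝓝[>] 0))
    (hgap : ∀ n, A ∩ ball (f y) (2 * r n) ⊆ ball (f y) (r n)) :
    ¬ Tendsto (fun δ => μ (f ⁻¹' A ∩ closedBall y δ) / μ (closedBall y δ)) (𝓝[>] 0) (𝓝 1) := by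
  intro hdens
  obtain ⟨v, hv⟩ : ∃ v, L v ≠ 0 := by
    by_contra! h
    exact hL (ContinuousLinearMap.ext h)
  set w₀ : E := (3 / 2 * ‖L v‖⁻¹) • v
  have hLw₀ : ‖L w₀‖ = 3 / 2 := by
    rw [map_smul, norm_smul, Real.norm_of_nonneg (by positivity)]
    field_simp [norm_ne_zero_iff.2 hv]
  set R := ‖w₀‖ + 1
  -- `L` maps `t` into the annulus `1 < ‖·‖ < 2` with room `1/4` for the error of linearization
  set t : Set E := {w | ‖w‖ < R ∧ 5 / 4 < ‖L w‖ ∧ ‖L w‖ < 7 / 4}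
  have ht : IsOpen t := by
    show IsOpen ({w | ‖w‖ < R} ∩ ({w | 5 / 4 < ‖L w‖} ∩ {w | ‖L w‖ < 7 / 4}))
    refine (isOpen_lt ?_ ?_).inter ((isOpen_lt ?_ ?_).inter (isOpen_lt ?_ ?_)) <;> fun_prop
  have hw₀ : w₀ ∈ t := ⟨by simp [R], by rw [hLw₀]; norm_num, by rw [hLw₀]; norm_num⟩
  have hmeet := Measure.eventually_nonempty_inter_smul_of_density_one μ _ y hdens t
    ht.measurableSet (ht.measure_ne_zero μ ⟨w₀, hw₀⟩)
  have happrox := hf.eventually_norm_sub_smul_le (by positivity : 0 < R)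
    (by norm_num : (0 : ℝ) < 1 / 4)
  obtain ⟨n, ⟨hrn, z, hzA, hz⟩, hest⟩ :=
    (hr.eventually ((eventually_mem_nhdsWithin.and hmeet).and happrox)).exists
  replace hrn : 0 < r n := hrn
  rw [singleton_add, mem_image] at hz
  obtain ⟨_, ⟨w, ⟨hwR, hw₁, hw₂⟩, rfl⟩, rfl⟩ := hz
  have hLrw : ‖r n • L w‖ = r n * ‖L w‖ := by rw [norm_smul, Real.norm_of_nonneg hrn.le]
  have hfz := hest w (mem_closedBall_zero_iff.2 hwR.le)
  have hlow : r n < dist (f (y + r n • w)) (f y) := by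
    rw [dist_eq_norm]
    have := norm_sub_norm_le (r n • L w) (f (y + r n • w) - f y)
    rw [norm_sub_rev (r n • L w)] at this
    nlinarith
  have hup : dist (f (y + r n • w)) (f y) < 2 * r n := by
    rw [dist_eq_norm]
    have := norm_le_insert' (f (y + r n • w) - f y) (r n • L w)
    nlinarith
  exact (mem_ball.1 (hgap n ⟨hzA, hup⟩)).not_gt hlow

end Density

section ZeroDerivative

theorem hausdorffMeasure_fin_eq_volume (s : ℕ) : (μH[s] : Measure (Fin s → ℝ)) = volume := by
  simpa using hausdorffMeasure_pi_real (ι := Fin s)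

variable {s : ℕ} {X : Type*} [MetricSpace X] [MeasurableSpace X] [BorelSpace X]

theorem LipschitzWith.hausdorffMeasure_image_null {f : (Fin s → ℝ) → X} {K : ℝ≥0}
    (hf : LipschitzWith K f) {N : Set (Fin s → ℝ)} (hN : volume N = 0) : μH[s] (f '' N) = 0 :=
  nonpos_iff_eq_zero.1 <| by
    simpa [hausdorffMeasure_fin_eq_volume, hN] using
      hf.hausdorffMeasure_image_le (Nat.cast_nonneg s) N

/-- The fibres of `x ↦ (⌊x i / δ⌋)ᵢ` are cubes of side `δ`, on each of which `f` is
`ε`-Lipschitz. -/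
theorem hausdorffMeasure_image_le_of_dist_le {f : (Fin s → ℝ) → X} {S : Set (Fin s → ℝ)}
    {ε : ℝ≥0} {δ : ℝ} (hδ : 0 < δ)
    (hf : ∀ x ∈ S, ∀ y ∈ S, dist x y < δ → dist (f x) (f y) ≤ ε * dist x y) :
    μH[s] (f '' S) ≤ ε ^ s * volume S := by
  set q : (Fin s → ℝ) → (Fin s → ℤ) := fun x i => ⌊x i / δ⌋
  have hq : Measurable q := by fun_prop
  have hclose : ∀ x y, q x = q y → dist x y < δ := fun x y h =>
    (dist_pi_lt_iff hδ).2 fun i => by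
    have := Int.abs_sub_lt_one_of_floor_eq_floor (congrFun h i)
    rwa [← sub_div, abs_div, abs_of_pos hδ, div_lt_one hδ, ← Real.dist_eq] at this
  have hlip : ∀ z, LipschitzOnWith ε f (S ∩ q ⁻¹' {z}) := fun z =>
    LipschitzOnWith.of_dist_le_mul fun x hx y hy =>
      hf x hx.1 y hy.1 (hclose x y (hx.2.trans hy.2.symm))
  set T := toMeasurable volume S
  calc μH[s] (f '' S) = μH[s] (⋃ z, f '' (S ∩ q ⁻¹' {z})) := by
        rw [← image_iUnion, ← inter_iUnion, ← preimage_iUnion, iUnion_of_singleton,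
          preimage_univ, inter_univ]
    _ ≤ ∑' z, μH[s] (f '' (S ∩ q ⁻¹' {z})) := measure_iUnion_le _
    _ ≤ ∑' z, ε ^ s * volume (T ∩ q ⁻¹' {z}) := ENNReal.tsum_le_tsum fun z => by
        calc μH[s] (f '' (S ∩ q ⁻¹' {z}))
            ≤ (ε : ℝ≥0∞) ^ (s : ℝ) * μH[s] (S ∩ q ⁻¹' {z}) :=
              (hlip z).hausdorffMeasure_image_le (Nat.cast_nonneg s)
          _ ≤ ε ^ s * volume (T ∩ q ⁻¹' {z}) := by
              rw [hausdorffMeasure_fin_eq_volume, ENNReal.rpow_natCast]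
              gcongr
              exact subset_toMeasurable _ _
    _ = ε ^ s * volume T := by
        rw [ENNReal.tsum_mul_left, ← measure_iUnion, ← inter_iUnion, ← preimage_iUnion,
          iUnion_of_singleton, preimage_univ, inter_univ]
        · exact fun z z' h => ((pairwise_disjoint_fiber q h).inter_left' T).inter_right' T
        · exact fun z =>
            (measurableSet_toMeasurable _ _).inter (hq (measurableSet_singleton z))
    _ = ε ^ s * volume S := by rw [measure_toMeasurable]

theorem hausdorffMeasure_image_le_of_eventually_dist_le {f : (Fin s → ℝ) → X}
    {S : Set (Fin s → ℝ)} {ε : ℝ≥0}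
    (hf : ∀ y ∈ S, ∀ᶠ z in 𝓝 y, dist (f z) (f y) ≤ ε * dist z y) :
    μH[s] (f '' S) ≤ ε ^ s * volume S := by
  set D : ℕ → Set (Fin s → ℝ) := fun k =>
    {y ∈ S | ∀ z, dist z y < 1 / (k + 1) → dist (f z) (f y) ≤ ε * dist z y}
  have hmono : Monotone D := monotone_nat_of_le_succ fun k y ⟨hy, h⟩ =>
    ⟨hy, fun z hz => h z (hz.trans_le (by gcongr; linarith))⟩
  have hS : S = ⋃ k, D k := by
    refine Subset.antisymm (fun y hy => ?_) (iUnion_subset fun k y hy => hy.1)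
    obtain ⟨δ, hδ, h⟩ := Metric.eventually_nhds_iff.1 (hf y hy)
    obtain ⟨k, hk⟩ := exists_nat_one_div_lt hδ
    exact mem_iUnion.2 ⟨k, hy, fun z hz => h (hz.trans hk)⟩
  rw [hS, image_iUnion,
    (show Monotone (f '' D ·) from fun _ _ h => image_mono (hmono h)).measure_iUnion]
  refine iSup_le fun k => ?_
  calc μH[s] (f '' D k) ≤ ε ^ s * volume (D k) :=
        hausdorffMeasure_image_le_of_dist_le Nat.one_div_pos_of_nat
          fun x _ y hy hxy => hy.2 x hxy
    _ ≤ ε ^ s * volume (⋃ k, D k) := by gcongr; exact subset_iUnion D k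

theorem hausdorffMeasure_image_setOf_hasFDerivAt_zero {F : Type*} [NormedAddCommGroup F]
    [NormedSpace ℝ F] [MeasurableSpace F] [BorelSpace F] (hs : 0 < s) (f : (Fin s → ℝ) → F) :
    μH[s] (f '' {y | HasFDerivAt f (0 : (Fin s → ℝ) →L[ℝ] F) y}) = 0 := by
  set Z := {y | HasFDerivAt f (0 : (Fin s → ℝ) →L[ℝ] F) y}
  rw [← inter_univ Z, ← iUnion_closedBall_nat 0, inter_iUnion, image_iUnion]
  refine measure_iUnion_null fun R => ?_
  set V := volume (closedBall (0 : Fin s → ℝ) R)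
  have hbound : ∀ ε : ℝ≥0, 0 < ε → μH[s] (f '' (Z ∩ closedBall 0 R)) ≤ ε ^ s * V := by
    intro ε hε
    refine (hausdorffMeasure_image_le_of_eventually_dist_le fun y hy => ?_).trans
      (mul_le_mul_right (measure_mono inter_subset_right) _)
    simpa [dist_eq_norm] using hy.1.isLittleO.def (NNReal.coe_pos.2 hε)
  have hlim : Tendsto (fun ε : ℝ≥0 => (ε : ℝ≥0∞) ^ s * V) (𝓝[>] 0) (𝓝 0) := by
    have h := (((ENNReal.continuous_pow s).comp ENNReal.continuous_coe).tendsto 0).mono_left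
      (nhdsWithin_le_nhds (s := Ioi 0))
    simpa [hs.ne'] using ENNReal.Tendsto.mul_const h (Or.inr measure_closedBall_lt_top.ne)
  exact nonpos_iff_eq_zero.1 (ge_of_tendsto hlim (eventually_mem_nhdsWithin.mono hbound))

end ZeroDerivative

theorem LipschitzWith.exists_hasFDerivAt_ne_zero_density_one {s : ℕ} (hs : 0 < s)
    {F : Type*} [NormedAddCommGroup F] [NormedSpace ℝ F] [FiniteDimensional ℝ F]
    [MeasurableSpace F] [BorelSpace F] {f : (Fin s → ℝ) → F} {K : ℝ≥0} (hf : LipschitzWith K f)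
    {Y : Set (Fin s → ℝ)} (hY : μH[s] (f '' Y) ≠ 0) :
    ∃ y ∈ Y, ∃ L : (Fin s → ℝ) →L[ℝ] F, HasFDerivAt f L y ∧ L ≠ 0 ∧
      Tendsto (fun δ => volume (Y ∩ closedBall y δ) / volume (closedBall y δ))
        (𝓝[>] 0) (𝓝 1) := by
  by_contra! h
  set N₁ := {y | ¬ Tendsto (fun δ => volume (Y ∩ closedBall y δ) / volume (closedBall y δ))
    (𝓝[>] 0) (𝓝 1)} ∩ Y
  set N₂ := {y | ¬ DifferentiableAt ℝ f y}
  have hN₁ : volume N₁ = 0 := nonpos_iff_eq_zero.1 <| (Measure.le_restrict_apply _ _).trans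
    (ae_iff.1 (Besicovitch.ae_tendsto_measure_inter_div volume Y)).le
  have hN₂ : volume N₂ = 0 := ae_iff.1 hf.ae_differentiableAt
  have hsub : Y ⊆ N₁ ∪ N₂ ∪ {y | HasFDerivAt f (0 : (Fin s → ℝ) →L[ℝ] F) y} := by
    intro y hy
    by_cases hd : DifferentiableAt ℝ f y
    · by_cases hL : fderiv ℝ f y = 0
      · exact Or.inr (hL ▸ hd.hasFDerivAt)
      · exact Or.inl (Or.inl ⟨h y hy _ hd.hasFDerivAt hL, hy⟩)
    · exact Or.inl (Or.inr hd)
  refine hY (measure_mono_null (image_mono hsub) ?_)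
  rw [image_union, image_union]
  exact measure_union_null (measure_union_null (hf.hausdorffMeasure_image_null hN₁)
    (hf.hausdorffMeasure_image_null hN₂)) (hausdorffMeasure_image_setOf_hasFDerivAt_zero hs f)

theorem IsHRectifiable.exists_lipschitzWith_measure_inter_range_ne_zero {s m : ℕ}
    {A : Set (Fin m → ℝ)} (hA : IsHRectifiable s A) (h0 : μH[s] A ≠ 0) :
    ∃ f : (Fin s → ℝ) → (Fin m → ℝ), (∃ K, LipschitzWith K f) ∧ μH[s] (A ∩ range f) ≠ 0 := by
  obtain ⟨g, hg, hnull⟩ := hA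
  by_contra! h
  refine h0 (measure_mono_null ?_ (measure_union_null hnull
    (measure_iUnion_null fun i => h (g i) (hg i))))
  rw [← inter_iUnion, sdiff_union_inter]

theorem stmt14_general (s m : ℕ) (hs : 1 ≤ s) (A : Set (Fin m → ℝ))
    (h0 : 0 < μH[(s : ℝ)] A)
    (hr : ∀ x ∈ A, ∃ r : ℕ → ℝ, (∀ n, 0 < r n) ∧
      Filter.Tendsto r Filter.atTop (nhds 0) ∧
      ∀ n, A ∩ Metric.ball x (2 * r n) = A ∩ Metric.ball x (r n)) :
    ¬ IsHRectifiable s A := by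
  intro hA
  obtain ⟨f, ⟨K, hf⟩, hfA⟩ := hA.exists_lipschitzWith_measure_inter_range_ne_zero h0.ne'
  rw [← image_preimage_eq_inter_range] at hfA
  obtain ⟨y, hyA, L, hL, hL0, hdens⟩ := hf.exists_hasFDerivAt_ne_zero_density_one hs hfA
  obtain ⟨r, hr0, hrlim, hgap⟩ := hr (f y) hyA
  exact not_tendsto_density_preimage_of_gap volume hL hL0
    (tendsto_nhdsWithin_iff.2 ⟨hrlim, .of_forall hr0⟩)
    (fun n => (hgap n).subset.trans inter_subset_right) hdens

/-- If `s ≥ 1`, `A ⊆ ℝ^m` is `H^s`-measurable with `0 < H^s(A) < ∞`, and every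
point of `A` admits radii `r_n → 0⁺` with `A ∩ B(x, 2 r_n) = A ∩ B(x, r_n)`,
then `A` is not `s`-rectifiable. -/
theorem stmt14 (s m : ℕ) (hs : 1 ≤ s) (A : Set (Fin m → ℝ))
    (hmeas : NullMeasurableSet A μH[(s : ℝ)])
    (h0 : 0 < μH[(s : ℝ)] A) (hfin : μH[(s : ℝ)] A < ⊤)
    (hr : ∀ x ∈ A, ∃ r : ℕ → ℝ, (∀ n, 0 < r n) ∧
      Filter.Tendsto r Filter.atTop (nhds 0) ∧
      ∀ n, A ∩ Metric.ball x (2 * r n) = A ∩ Metric.ball x (r n)) :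
    ¬ IsHRectifiable s A :=
  stmt14_general s m hs A h0 hr
end
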